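/- Let F(r, θ, V) = θ²(√2·√(V²+2a_m r) − V)/a_m + |θ|³/(3ω_m) + √2·(V²+2a_m r)^{3/2}(23V² + 40a_m² + 46a_m r)/(240 a_m³) − (V³/(3a_m) + V r²/a_m + 2V³ r/(3a_m²) + 2V⁵/(15a_m³)). Then along the flow ṙ = −V, θ̇ = 0, V̇ = a_m (the 'accelerate' mode), if (r,V) ≠ (0,0) and V² < 2a_m r with r > 0, V ≥ 0, one has dF/dt = −(r² + θ² + V²). -/

import Mathlib

/-!
Along the accelerate mode the quantity `V² + 2 a_m r` is conserved (`d/dt = 2 V a_m - 2 a_m V`),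
so the third summand of the terminal cost, which depends on `(r, V)` only through it, is constant,
and so is `|θ|³` since `θ̇ = 0`. What remains is `θ²` times `(√2 √(V² + 2 a_m r) - V) / a_m`, a
factor with derivative `-1`, and the subtracted polynomial in `(r, V)`, whose derivative is
`r² + V²`.
-/

/-- The NMPC terminal cost in terminal-set coordinates (r, θ, V). -/
noncomputable def terminalCost (a_m ω_m r θ V : ℝ) : ℝ :=
  θ ^ 2 * ((Real.sqrt 2 * Real.sqrt (V ^ 2 + 2 * a_m * r) - V) / a_m)
    + |θ| ^ 3 / (3 * ω_m)
    + Real.sqrt 2 * (V ^ 2 + 2 * a_m * r) ^ ((3:ℝ)/2)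
        * (23 * V ^ 2 + 40 * a_m ^ 2 + 46 * a_m * r) / (240 * a_m ^ 3)
    - (V ^ 3 / (3 * a_m) + V * r ^ 2 / a_m
        + 2 * V ^ 3 * r / (3 * a_m ^ 2)
        + 2 * V ^ 5 / (15 * a_m ^ 3))

theorem differentiable_abs_pow {n : ℕ} (hn : 2 ≤ n) : Differentiable ℝ (fun x : ℝ => |x| ^ n) := by
  simpa [Real.rpow_natCast] using
    differentiable_norm_rpow (E := ℝ) (p := n) (by exact_mod_cast hn)

section Accelerate

variable {a : ℝ} {r θ V : ℝ → ℝ} {t : ℝ}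

theorem hasDerivAt_sq_add_two_mul_eq_zero (hr : HasDerivAt r (-V t) t) (hV : HasDerivAt V a t) :
    HasDerivAt (fun s => V s ^ 2 + 2 * a * r s) 0 t := by
  refine ((hV.pow 2).add (hr.const_mul (2 * a))).congr_deriv ?_
  push_cast
  ring

theorem hasDerivAt_sqrt_two_mul_rpow_three_halves_eq_zero
    (hu : HasDerivAt (fun s => V s ^ 2 + 2 * a * r s) 0 t) :
    HasDerivAt (fun s => Real.sqrt 2 * (V s ^ 2 + 2 * a * r s) ^ ((3 : ℝ) / 2)
      * (23 * V s ^ 2 + 40 * a ^ 2 + 46 * a * r s) / (240 * a ^ 3)) 0 t := by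
  let g : ℝ → ℝ := fun u => Real.sqrt 2 * u ^ ((3 : ℝ) / 2) * (23 * u + 40 * a ^ 2) / (240 * a ^ 3)
  have hg : DifferentiableAt ℝ g (V t ^ 2 + 2 * a * r t) := by
    refine ((DifferentiableAt.rpow_const differentiableAt_id (Or.inr ?_)).const_mul _).mul
      ((differentiableAt_id.const_mul _).add_const _) |>.div_const _
    norm_num
  have hgu : HasDerivAt (g ∘ fun s => V s ^ 2 + 2 * a * r s) 0 t := by
    simpa using hg.hasDerivAt.comp t hu
  convert hgu using 1
  ext s
  simp only [g, Function.comp_apply]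
  ring

theorem hasDerivAt_terminalCost_poly (ha : a ≠ 0) (hr : HasDerivAt r (-V t) t)
    (hV : HasDerivAt V a t) :
    HasDerivAt (fun s => V s ^ 3 / (3 * a) + V s * r s ^ 2 / a
      + 2 * V s ^ 3 * r s / (3 * a ^ 2) + 2 * V s ^ 5 / (15 * a ^ 3)) (r t ^ 2 + V t ^ 2) t := by
  refine ((((hV.pow 3).div_const (3 * a)).add ((hV.mul (hr.pow 2)).div_const a)).add
    ((((hV.pow 3).const_mul 2).mul hr).div_const (3 * a ^ 2)) |>.add
    (((hV.pow 5).const_mul 2).div_const (15 * a ^ 3))).congr_deriv ?_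
  push_cast
  simp only [Pi.pow_apply]
  field_simp
  ring

end Accelerate

theorem terminal_cost_decrease_accelerate
    (a_m ω_m : ℝ) (ha : a_m > 0)
    (r θ V : ℝ → ℝ) (t : ℝ)
    (hrdot : HasDerivAt r (-(V t)) t)
    (hθdot : HasDerivAt θ 0 t)
    (hVdot : HasDerivAt V a_m t)
    (hVr : (V t) ^ 2 < 2 * a_m * r t) :
    HasDerivAt (fun s => terminalCost a_m ω_m (r s) (θ s) (V s))
      (-((r t) ^ 2 + (θ t) ^ 2 + (V t) ^ 2)) t := by
  have hu := hasDerivAt_sq_add_two_mul_eq_zero hrdot hVdot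
  have hu_pos : 0 < V t ^ 2 + 2 * a_m * r t := by linarith [sq_nonneg (V t)]
  have hθ_term : HasDerivAt
      (fun s => θ s ^ 2 * ((Real.sqrt 2 * Real.sqrt (V s ^ 2 + 2 * a_m * r s) - V s) / a_m))
      (-θ t ^ 2) t := by
    refine ((hθdot.pow 2).mul (((hu.sqrt hu_pos.ne').const_mul (Real.sqrt 2)).sub hVdot
      |>.div_const a_m)).congr_deriv ?_
    simp only [Pi.pow_apply]
    field_simp
    ring
  have hθ_abs : HasDerivAt (fun s => |θ s| ^ 3 / (3 * ω_m)) 0 t := by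
    simpa using ((differentiable_abs_pow (by norm_num) (θ t)).hasDerivAt.comp t hθdot).div_const
      (3 * ω_m)
  have hpoly := hasDerivAt_terminalCost_poly ha.ne' hrdot hVdot
  exact (((hθ_term.add hθ_abs).add (hasDerivAt_sqrt_two_mul_rpow_three_halves_eq_zero hu)).sub
    hpoly).congr_deriv (by ring)
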